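/- Bounded-differences property of the leave-two-out empirical MMD statistic (proof of Theorem 1, Appendix A): Fix i ∈ [M] and j ∈ [M] with j ≠ i, and regard g(ȳ) := MMD²(y_j^n, ȳ_{i,j}^n) as a function of the (M−1)n real coordinates of ȳ_i^n (the pooled sequences other than y_i^n). For each coordinate index k, let c_k := sup |g(ȳ) − g(ȳ')| over all pairs ȳ, ȳ' differing only in the k-th coordinate. Then c_k ≤ 8K₀/n for each of the n coordinates belonging to y_j^n, c_k ≤ 8K₀/((M−2)n) for each of the remaining (M−2)n coordinates, and consequently Σ_k c_k² ≤ (64·K₀²/n)·(1 + 1/(M−2)). -/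
import Mathlib


open MeasureTheory Filter
open scoped ENNReal Classical

noncomputable section

/-- Unbiased empirical MMD² statistic between two finite samples indexed by finite types. -/
def empMMD2 {ι κ : Type} [Fintype ι] [DecidableEq ι] [Fintype κ] [DecidableEq κ]
    (k : ℝ → ℝ → ℝ) (x : ι → ℝ) (y : κ → ℝ) : ℝ :=
  ((Fintype.card ι : ℝ) * ((Fintype.card ι : ℝ) - 1))⁻¹ *
      ∑ i : ι, ∑ j : ι, (if i ≠ j then k (x i) (x j) else 0)
    + ((Fintype.card κ : ℝ) * ((Fintype.card κ : ℝ) - 1))⁻¹ *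
      ∑ i : κ, ∑ j : κ, (if i ≠ j then k (y i) (y j) else 0)
    - 2 / ((Fintype.card ι : ℝ) * (Fintype.card κ : ℝ)) *
      ∑ i : ι, ∑ j : κ, k (x i) (y j)

/-- Population MMD² between two distributions on ℝ. -/
def mmd2 (k : ℝ → ℝ → ℝ) (μ ν : Measure ℝ) : ℝ :=
  (∫ x, ∫ x', k x x' ∂μ ∂μ) - 2 * (∫ x, ∫ y, k x y ∂ν ∂μ) + (∫ y, ∫ y', k y y' ∂ν ∂ν)

section Aux

variable {ι κ : Type} [Fintype ι] [DecidableEq ι] [Fintype κ] [DecidableEq κ]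

lemma abs_diff_le_Icc {K₀ u v : ℝ} (hu : u ∈ Set.Icc 0 K₀) (hv : v ∈ Set.Icc 0 K₀) :
    |u - v| ≤ K₀ := by
  rw [abs_sub_le_iff]
  constructor
  · linarith [hu.2, hv.1]
  · linarith [hv.2, hu.1]

lemma cross_sum_diff (F G : ι → κ → ℝ) (t : ι) (K₀ : ℝ)
    (h0 : ∀ a b, a ≠ t → F a b = G a b)
    (hb : ∀ a b, |F a b - G a b| ≤ K₀) :
    |∑ a, ∑ b, F a b - ∑ a, ∑ b, G a b| ≤ (Fintype.card κ : ℝ) * K₀ := by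
  rw [← Finset.sum_sub_distrib]
  refine (Finset.abs_sum_le_sum_abs _ _).trans ?_
  have h1 : ∀ a : ι, |∑ b, F a b - ∑ b, G a b| ≤
      (if a = t then (Fintype.card κ : ℝ) * K₀ else 0) := by
    intro a
    by_cases ha : a = t
    · rw [if_pos ha, ← Finset.sum_sub_distrib]
      refine (Finset.abs_sum_le_sum_abs _ _).trans ?_
      calc ∑ b, |F a b - G a b| ≤ ∑ _b : κ, K₀ :=
            Finset.sum_le_sum fun b _ => hb a b
        _ = (Fintype.card κ : ℝ) * K₀ := by
            rw [Finset.sum_const, nsmul_eq_mul]; rfl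
    · rw [if_neg ha]
      have : (∑ b, F a b) = ∑ b, G a b :=
        Finset.sum_congr rfl fun b _ => h0 a b ha
      simp [this]
  refine (Finset.sum_le_sum fun a _ => h1 a).trans ?_
  rw [Finset.sum_ite_eq' Finset.univ t (fun _ => (Fintype.card κ : ℝ) * K₀)]
  simp

lemma diag_sum_diff (F G : ι → ι → ℝ) (t : ι) (K₀ : ℝ) (hK : 0 ≤ K₀)
    (h0 : ∀ a b, a ≠ t → b ≠ t → F a b = G a b)
    (hb : ∀ a b, |F a b - G a b| ≤ K₀) :
    |∑ a, ∑ b, F a b - ∑ a, ∑ b, G a b| ≤ 2 * (Fintype.card ι : ℝ) * K₀ := by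
  rw [← Finset.sum_sub_distrib]
  refine (Finset.abs_sum_le_sum_abs _ _).trans ?_
  have h1 : ∀ a : ι, |∑ b, F a b - ∑ b, G a b| ≤
      (if a = t then (Fintype.card ι : ℝ) * K₀ else K₀) := by
    intro a
    by_cases ha : a = t
    · rw [if_pos ha, ← Finset.sum_sub_distrib]
      refine (Finset.abs_sum_le_sum_abs _ _).trans ?_
      calc ∑ b, |F a b - G a b| ≤ ∑ _b : ι, K₀ :=
            Finset.sum_le_sum fun b _ => hb a b
        _ = (Fintype.card ι : ℝ) * K₀ := by
            rw [Finset.sum_const, nsmul_eq_mul]; rfl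
    · rw [if_neg ha, ← Finset.sum_sub_distrib]
      refine (Finset.abs_sum_le_sum_abs _ _).trans ?_
      have h2 : ∀ b : ι, |F a b - G a b| ≤ if b = t then K₀ else 0 := by
        intro b
        by_cases hbt : b = t
        · rw [if_pos hbt]; exact hb a b
        · rw [if_neg hbt, h0 a b ha hbt]; simp
      refine (Finset.sum_le_sum fun b _ => h2 b).trans ?_
      rw [Finset.sum_ite_eq' Finset.univ t (fun _ => K₀)]
      simp
  refine (Finset.sum_le_sum fun a _ => h1 a).trans ?_
  have h3 : ∀ a : ι, (if a = t then (Fintype.card ι : ℝ) * K₀ else K₀)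
      = K₀ + (if a = t then (Fintype.card ι : ℝ) * K₀ - K₀ else 0) := by
    intro a; by_cases ha : a = t <;> simp [ha]
  simp only [h3]
  rw [Finset.sum_add_distrib, Finset.sum_const, nsmul_eq_mul,
    Finset.sum_ite_eq' Finset.univ t (fun _ => (Fintype.card ι : ℝ) * K₀ - K₀)]
  simp only [Finset.mem_univ, if_true]
  rw [Finset.card_univ]
  nlinarith [hK]

lemma diag_swap (f : ℝ → ℝ → ℝ) (x : ι → ℝ) :
    ∑ a : ι, ∑ b : ι, (if a ≠ b then f (x b) (x a) else 0) =
    ∑ a : ι, ∑ b : ι, (if a ≠ b then f (x a) (x b) else 0) := by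
  rw [Finset.sum_comm]
  refine Finset.sum_congr rfl fun a _ => Finset.sum_congr rfl fun b _ => ?_
  exact if_congr ne_comm rfl rfl

lemma empMMD2_swap (k : ℝ → ℝ → ℝ) (x : ι → ℝ) (y : κ → ℝ) :
    empMMD2 k x y = empMMD2 (Function.swap k) y x := by
  have h1 : ∑ a : ι, ∑ b : ι, (if a ≠ b then Function.swap k (x a) (x b) else 0) =
      ∑ a : ι, ∑ b : ι, (if a ≠ b then k (x a) (x b) else 0) := diag_swap k x
  have h2 : ∑ a : κ, ∑ b : κ, (if a ≠ b then Function.swap k (y a) (y b) else 0) =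
      ∑ a : κ, ∑ b : κ, (if a ≠ b then k (y a) (y b) else 0) := diag_swap k y
  have h3 : ∑ a : κ, ∑ b : ι, Function.swap k (y a) (x b) =
      ∑ a : ι, ∑ b : κ, k (x a) (y b) := by
    rw [Finset.sum_comm]
  simp only [empMMD2]
  rw [h1, h2, h3]
  ring

lemma empMMD2_diff_x (k : ℝ → ℝ → ℝ) (K₀ : ℝ) (hK₀ : 0 < K₀)
    (hkbd : ∀ x y : ℝ, k x y ∈ Set.Icc (0 : ℝ) K₀)
    (x x' : ι → ℝ) (y : κ → ℝ) (t : ι) (hx : ∀ a, a ≠ t → x a = x' a)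
    (hι : 2 ≤ Fintype.card ι) (hκ : 1 ≤ Fintype.card κ) :
    |empMMD2 k x y - empMMD2 k x' y| ≤ 8 * K₀ / (Fintype.card ι : ℝ) := by
  set N : ℝ := (Fintype.card ι : ℝ) with hN
  set Nκ : ℝ := (Fintype.card κ : ℝ) with hNκ
  have hN2 : (2:ℝ) ≤ N := by rw [hN]; exact_mod_cast hι
  have hNκ1 : (1:ℝ) ≤ Nκ := by rw [hNκ]; exact_mod_cast hκ
  have hNpos : (0:ℝ) < N := by linarith
  have hN1pos : (0:ℝ) < N - 1 := by linarith
  have hNκpos : (0:ℝ) < Nκ := by linarith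
  -- bounds on the two changed sums
  have hd1 : |(∑ a : ι, ∑ b : ι, (if a ≠ b then k (x a) (x b) else 0)) -
      ∑ a : ι, ∑ b : ι, (if a ≠ b then k (x' a) (x' b) else 0)| ≤ 2 * N * K₀ := by
    refine diag_sum_diff _ _ t K₀ hK₀.le ?_ ?_
    · intro a b ha hb
      rw [hx a ha, hx b hb]
    · intro a b
      by_cases hab : a ≠ b
      · rw [if_pos hab, if_pos hab]
        exact abs_diff_le_Icc (hkbd _ _) (hkbd _ _)
      · rw [if_neg hab, if_neg hab]; simp [hK₀.le]
  have hd3 : |(∑ a : ι, ∑ b : κ, k (x a) (y b)) -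
      ∑ a : ι, ∑ b : κ, k (x' a) (y b)| ≤ Nκ * K₀ := by
    refine cross_sum_diff _ _ t K₀ ?_ ?_
    · intro a b ha; rw [hx a ha]
    · intro a b; exact abs_diff_le_Icc (hkbd _ _) (hkbd _ _)
  have hexp : empMMD2 k x y - empMMD2 k x' y =
      (N * (N - 1))⁻¹ * ((∑ a : ι, ∑ b : ι, (if a ≠ b then k (x a) (x b) else 0)) -
        ∑ a : ι, ∑ b : ι, (if a ≠ b then k (x' a) (x' b) else 0))
      - 2 / (N * Nκ) * ((∑ a : ι, ∑ b : κ, k (x a) (y b)) -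
        ∑ a : ι, ∑ b : κ, k (x' a) (y b)) := by
    unfold empMMD2
    ring
  rw [hexp]
  have hc1 : (0:ℝ) ≤ (N * (N - 1))⁻¹ := by positivity
  have hc3 : (0:ℝ) ≤ 2 / (N * Nκ) := by positivity
  calc |(N * (N - 1))⁻¹ * _ - 2 / (N * Nκ) * _|
      ≤ (N * (N - 1))⁻¹ * (2 * N * K₀) + 2 / (N * Nκ) * (Nκ * K₀) := by
        refine (abs_sub _ _).trans ?_
        rw [abs_mul, abs_mul, abs_of_nonneg hc1, abs_of_nonneg hc3]
        gcongr
    _ = 2 * K₀ / (N - 1) + 2 * K₀ / N := by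
        field_simp
    _ ≤ 8 * K₀ / N := by
        rw [div_add_div _ _ (ne_of_gt hN1pos) (ne_of_gt hNpos), div_le_div_iff₀ (by positivity) hNpos]
        nlinarith [mul_nonneg (mul_nonneg hK₀.le hNpos.le) (by linarith : (0:ℝ) ≤ 2 * N - 3)]
  
lemma empMMD2_diff_y (k : ℝ → ℝ → ℝ) (K₀ : ℝ) (hK₀ : 0 < K₀)
    (hkbd : ∀ x y : ℝ, k x y ∈ Set.Icc (0 : ℝ) K₀)
    (x : ι → ℝ) (y y' : κ → ℝ) (t : κ) (hy : ∀ b, b ≠ t → y b = y' b)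
    (hκ : 2 ≤ Fintype.card κ) (hι : 1 ≤ Fintype.card ι) :
    |empMMD2 k x y - empMMD2 k x y'| ≤ 8 * K₀ / (Fintype.card κ : ℝ) := by
  rw [empMMD2_swap k x y, empMMD2_swap k x y']
  exact empMMD2_diff_x (Function.swap k) K₀ hK₀ (fun a b => hkbd b a) y y' x t hy hκ hι

end Aux

/-- Bounded-differences property of the leave-two-out empirical MMD statistic
(Appendix A). -/
theorem mcdiarmid_constants_empMMD
    (M n : ℕ) (hM : 3 ≤ M) (hn : 2 ≤ n)
    (k : ℝ → ℝ → ℝ) (hkmeas : Measurable (Function.uncurry k))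
    (K₀ : ℝ) (hK₀ : 0 < K₀) (hkbd : ∀ x y : ℝ, k x y ∈ Set.Icc (0 : ℝ) K₀)
    (i j : Fin M) (hij : j ≠ i) :
    let g : ({m : Fin M // m ≠ i} × Fin n → ℝ) → ℝ := fun z =>
      empMMD2 k (fun t : Fin n => z (⟨j, hij⟩, t))
        (fun p : {m : Fin M // m ≠ i ∧ m ≠ j} × Fin n => z (⟨p.1.1, p.1.2.1⟩, p.2))
    let c : ({m : Fin M // m ≠ i} × Fin n) → ℝ := fun kk =>
      sSup {d : ℝ | ∃ z z' : {m : Fin M // m ≠ i} × Fin n → ℝ,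
        (∀ l, l ≠ kk → z l = z' l) ∧ d = |g z - g z'|}
    (∀ t : Fin n, c (⟨j, hij⟩, t) ≤ 8 * K₀ / (n : ℝ)) ∧
    (∀ kk : {m : Fin M // m ≠ i} × Fin n, (kk.1 : Fin M) ≠ j →
      c kk ≤ 8 * K₀ / (((M : ℝ) - 2) * (n : ℝ))) ∧
    (∑ kk : {m : Fin M // m ≠ i} × Fin n, (c kk) ^ 2 ≤
      64 * K₀ ^ 2 / (n : ℝ) * (1 + 1 / ((M : ℝ) - 2))) := by
  intro g c
  -- cardinalities
  have hcardsub : Fintype.card {m : Fin M // m ≠ i ∧ m ≠ j} = M - 2 := by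
    rw [Fintype.card_subtype]
    have : (Finset.univ.filter fun m : Fin M => m ≠ i ∧ m ≠ j) =
        Finset.univ \ {i, j} := by
      ext m
      simp [not_or]
    rw [this, Finset.card_sdiff_of_subset (Finset.subset_univ _)]
    have : ({i, j} : Finset (Fin M)).card = 2 := by
      rw [Finset.card_insert_of_notMem (by simpa using (Ne.symm hij)), Finset.card_singleton]
    rw [this]
    simp
  have hcardy : Fintype.card ({m : Fin M // m ≠ i ∧ m ≠ j} × Fin n) = (M - 2) * n := by
    rw [Fintype.card_prod, hcardsub, Fintype.card_fin]
  have hM2 : (0:ℝ) < (M:ℝ) - 2 := by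
    have : (3:ℝ) ≤ (M:ℝ) := by exact_mod_cast hM
    linarith
  have hnR : (2:ℝ) ≤ (n:ℝ) := by exact_mod_cast hn
  have hnpos : (0:ℝ) < (n:ℝ) := by linarith
  have hcardyR : ((Fintype.card ({m : Fin M // m ≠ i ∧ m ≠ j} × Fin n)) : ℝ) =
      ((M:ℝ) - 2) * (n:ℝ) := by
    rw [hcardy]
    push_cast [Nat.cast_sub (by omega : 2 ≤ M)]
    ring
  have hcardy2 : 2 ≤ Fintype.card ({m : Fin M // m ≠ i ∧ m ≠ j} × Fin n) := by
    rw [hcardy]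
    have h1 : 1 ≤ M - 2 := by omega
    calc 2 = 1 * 2 := by norm_num
      _ ≤ (M - 2) * n := Nat.mul_le_mul h1 hn
  have hcardy1 : 1 ≤ Fintype.card ({m : Fin M // m ≠ i ∧ m ≠ j} × Fin n) := by omega
  have hcardx : 2 ≤ Fintype.card (Fin n) := by simpa using hn
  -- bounds for each coordinate
  set B : ({m : Fin M // m ≠ i} × Fin n) → ℝ := fun kk =>
    if (kk.1 : Fin M) = j then 8 * K₀ / (n : ℝ) else 8 * K₀ / (((M : ℝ) - 2) * (n : ℝ))
    with hB
  have hBpos : ∀ kk, 0 < B kk := by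
    intro kk
    rw [hB]
    dsimp only
    split
    · positivity
    · positivity
  have key : ∀ kk : {m : Fin M // m ≠ i} × Fin n,
      ∀ z z' : {m : Fin M // m ≠ i} × Fin n → ℝ,
      (∀ l, l ≠ kk → z l = z' l) → |g z - g z'| ≤ B kk := by
    intro kk z z' hzz
    by_cases hkj : (kk.1 : Fin M) = j
    · -- changed coordinate is in row j : x changes, y fixed
      have hkk1 : kk.1 = ⟨j, hij⟩ := Subtype.ext hkj
      have hy : (fun p : {m : Fin M // m ≠ i ∧ m ≠ j} × Fin n => z (⟨p.1.1, p.1.2.1⟩, p.2)) =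
          fun p => z' (⟨p.1.1, p.1.2.1⟩, p.2) := by
        funext p
        apply hzz
        intro h
        apply p.1.2.2
        have h1 : (⟨p.1.1, p.1.2.1⟩ : {m : Fin M // m ≠ i}) = kk.1 := by
          rw [Prod.ext_iff] at h
          exact h.1
        rw [hkk1] at h1
        exact congrArg Subtype.val h1
      have hBval : B kk = 8 * K₀ / (n : ℝ) := by rw [hB]; simp [hkj]
      rw [hBval]
      show |empMMD2 k _ _ - empMMD2 k _ _| ≤ _
      rw [hy]
      have := empMMD2_diff_x k K₀ hK₀ hkbd
        (fun t : Fin n => z (⟨j, hij⟩, t)) (fun t : Fin n => z' (⟨j, hij⟩, t))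
        (fun p : {m : Fin M // m ≠ i ∧ m ≠ j} × Fin n => z' (⟨p.1.1, p.1.2.1⟩, p.2))
        kk.2 ?_ hcardx hcardy1
      · simpa using this
      · intro a ha
        apply hzz
        intro h
        apply ha
        rw [Prod.ext_iff] at h
        exact h.2
    · -- changed coordinate is outside rows i and j : y changes, x fixed
      have hkki : (kk.1 : Fin M) ≠ i := kk.1.2
      have hx : (fun t : Fin n => z (⟨j, hij⟩, t)) = fun t => z' (⟨j, hij⟩, t) := by
        funext t
        apply hzz
        intro h
        apply hkj
        rw [Prod.ext_iff] at h
        rw [← h.1]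
      have hBval : B kk = 8 * K₀ / (((M : ℝ) - 2) * (n : ℝ)) := by rw [hB]; simp [hkj]
      rw [hBval]
      show |empMMD2 k _ _ - empMMD2 k _ _| ≤ _
      rw [hx]
      have := empMMD2_diff_y k K₀ hK₀ hkbd
        (fun t : Fin n => z' (⟨j, hij⟩, t))
        (fun p : {m : Fin M // m ≠ i ∧ m ≠ j} × Fin n => z (⟨p.1.1, p.1.2.1⟩, p.2))
        (fun p : {m : Fin M // m ≠ i ∧ m ≠ j} × Fin n => z' (⟨p.1.1, p.1.2.1⟩, p.2))
        ((⟨kk.1.1, ⟨kk.1.2, hkj⟩⟩ : {m : Fin M // m ≠ i ∧ m ≠ j}), kk.2)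
        ?_ hcardy2 (by simpa using (by omega : 1 ≤ n))
      · rw [hcardyR] at this
        exact this
      · intro p hp
        apply hzz
        intro h
        apply hp
        rw [Prod.ext_iff] at h
        refine Prod.ext ?_ h.2
        apply Subtype.ext
        have h1 := congrArg Subtype.val h.1
        exact h1
  have hub : ∀ kk, ∀ d ∈ {d : ℝ | ∃ z z' : {m : Fin M // m ≠ i} × Fin n → ℝ,
      (∀ l, l ≠ kk → z l = z' l) ∧ d = |g z - g z'|}, d ≤ B kk := by
    rintro kk d ⟨z, z', hzz, rfl⟩
    exact key kk z z' hzz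
  have hcB : ∀ kk, c kk ≤ B kk := by
    intro kk
    exact Real.sSup_le (hub kk) (hBpos kk).le
  have hc0 : ∀ kk, 0 ≤ c kk := by
    intro kk
    refine le_csSup ⟨B kk, fun d hd => hub kk d hd⟩ ?_
    exact ⟨(fun _ => 0), (fun _ => 0), fun _ _ => rfl, by simp⟩
  refine ⟨?_, ?_, ?_⟩
  · intro t
    simpa [hB] using hcB (⟨j, hij⟩, t)
  · intro kk hkj
    simpa [hB, hkj] using hcB kk
  · have hsq : ∀ kk, (c kk) ^ 2 ≤ (B kk) ^ 2 := by
      intro kk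
      exact pow_le_pow_left₀ (hc0 kk) (hcB kk) 2
    refine (Finset.sum_le_sum fun kk _ => hsq kk).trans ?_
    -- compute the sum of B²
    have hcardm : Fintype.card {m : Fin M // m ≠ i} = M - 1 := by
      rw [Fintype.card_subtype]
      have h : (Finset.univ.filter fun m : Fin M => m ≠ i) = Finset.univ \ {i} := by
        ext m; simp
      rw [h, Finset.card_sdiff_of_subset (Finset.subset_univ _)]
      simp
    set b1 : ℝ := 8 * K₀ / (n : ℝ) with hb1
    set b2 : ℝ := 8 * K₀ / (((M : ℝ) - 2) * (n : ℝ)) with hb2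
    have hBsq : ∀ kk : {m : Fin M // m ≠ i} × Fin n,
        (B kk) ^ 2 = b2 ^ 2 +
          (if kk.1 = (⟨j, hij⟩ : {m : Fin M // m ≠ i}) then b1 ^ 2 - b2 ^ 2 else 0) := by
      intro kk
      rw [hB]
      dsimp only
      by_cases h : (kk.1 : Fin M) = j
      · rw [if_pos h, if_pos (Subtype.ext h)]; ring
      · rw [if_neg h, if_neg (fun hh => h (congrArg Subtype.val hh))]; ring
    simp only [hBsq]
    rw [Finset.sum_add_distrib, Finset.sum_const, Finset.card_univ]
    have hsum2 : (∑ kk : {m : Fin M // m ≠ i} × Fin n,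
        (if kk.1 = (⟨j, hij⟩ : {m : Fin M // m ≠ i}) then b1 ^ 2 - b2 ^ 2 else 0)) =
        (n : ℝ) * (b1 ^ 2 - b2 ^ 2) := by
      rw [Fintype.sum_prod_type]
      have h1 : ∀ m : {m : Fin M // m ≠ i},
          (∑ _t : Fin n, (if m = (⟨j, hij⟩ : {m : Fin M // m ≠ i}) then b1 ^ 2 - b2 ^ 2 else 0)) =
          (if m = (⟨j, hij⟩ : {m : Fin M // m ≠ i}) then (n : ℝ) * (b1 ^ 2 - b2 ^ 2) else 0) := by
        intro m
        rw [Finset.sum_const, Finset.card_univ, Fintype.card_fin, nsmul_eq_mul, mul_ite, mul_zero]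
      simp only [h1]
      rw [Finset.sum_ite_eq' Finset.univ (⟨j, hij⟩ : {m : Fin M // m ≠ i})
        (fun _ => (n : ℝ) * (b1 ^ 2 - b2 ^ 2))]
      simp
    rw [hsum2]
    have hcards : Fintype.card ({m : Fin M // m ≠ i} × Fin n) = (M - 1) * n := by
      rw [Fintype.card_prod, hcardm, Fintype.card_fin]
    rw [hcards, nsmul_eq_mul]
    have hcast : (((M - 1) * n : ℕ) : ℝ) = ((M : ℝ) - 1) * (n : ℝ) := by
      push_cast [Nat.cast_sub (by omega : 1 ≤ M)]
      ring
    rw [hcast, hb1, hb2]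
    apply le_of_eq
    field_simp
    ring
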